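/- arXiv:1103.4577 — 2 statements merged into one kernel-verified Lean document; each statement's English description precedes it below -/
import Mathlib

section
/- Let S be a finite set, R ⊆ S × S a binary relation, and m a 1-bounded pseudometric on S such that for all s,t ∈ S: s R t if and only if m(s,t) = 0. Then for any distributions Δ, Θ ∈ D(S): Δ R† Θ if and only if m̂(Δ,Θ) = 0. -/
/-!
Both sides say that `Δ` and `Θ` have a coupling supported on `{m = 0}`. For the lifting this
holds for any relation: point distributions of related states have a coupling supported on
`R`, such couplings are closed under convex combinations, and conversely a coupling `y`
exhibits `Δ R† Θ` as the convex combination of the pairs of point distributions `(s̄, t̄)`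
with weights `y s t`. For the Kantorovich lifting, the couplings form a compact polytope,
so the infimum is attained; as `m ≥ 0`, it is `0` exactly when some coupling has all
of its mass on `{m = 0}`.
-/

open scoped Classical

/-- A (discrete) probability distribution over a finite set `S`. -/
structure FDist (S : Type*) [Fintype S] where
  f : S → ℝ
  nonneg : ∀ s, 0 ≤ f s
  sum_one : ∑ s, f s = 1

/-- The point distribution at `s`. -/
noncomputable def FDist.point {S : Type*} [Fintype S] (s : S) : FDist S where
  f := fun u => if u = s then 1 else 0
  nonneg := by intro u; (try simp only []); split <;> norm_num
  sum_one := by simp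

/-- The lifting `R†` of a relation to distributions: the smallest relation
relating point distributions of related states and closed under convex
combinations. -/
inductive Lift {S T : Type*} [Fintype S] [Fintype T] (R : S → T → Prop) :
    FDist S → FDist T → Prop
  | point {s : S} {t : T} :
      R s t → Lift R (FDist.point s) (FDist.point t)
  | convex (I : Finset ℕ) (p : ℕ → ℝ)
      (hp : ∀ i ∈ I, 0 ≤ p i) (hsum : ∑ i ∈ I, p i = 1)
      (Δs : ℕ → FDist S) (Θs : ℕ → FDist T)
      (h : ∀ i ∈ I, Lift R (Δs i) (Θs i))
      (Δ : FDist S) (Θ : FDist T)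
      (hΔ : Δ.f = ∑ i ∈ I, p i • (Δs i).f)
      (hΘ : Θ.f = ∑ i ∈ I, p i • (Θs i).f) :
      Lift R Δ Θ

/-- The Kantorovich lifting of a pseudometric `m` on a finite set `S`:
the optimal value of the linear program minimising `∑ s t, y s t * m s t`
over couplings `y` of `Δ` and `Θ`. -/
noncomputable def kantorovich {S : Type*} [Fintype S] (m : S → S → ℝ)
    (Δ Θ : FDist S) : ℝ :=
  sInf { c | ∃ y : S → S → ℝ,
    (∀ s t, 0 ≤ y s t) ∧
    (∀ s, ∑ t, y s t = Δ.f s) ∧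
    (∀ t, ∑ s, y s t = Θ.f t) ∧
    c = ∑ s, ∑ t, y s t * m s t }


namespace FDist

variable {S T : Type*} [Fintype S] [Fintype T]

lemma f_le_one (Δ : FDist S) (s : S) : Δ.f s ≤ 1 :=
  Δ.sum_one ▸ Finset.single_le_sum (fun u _ => Δ.nonneg u) (Finset.mem_univ s)

structure IsCoupling (Δ : FDist S) (Θ : FDist T) (y : S → T → ℝ) : Prop where
  nonneg : ∀ s t, 0 ≤ y s t
  marginal_left : ∀ s, ∑ t, y s t = Δ.f s
  marginal_right : ∀ t, ∑ s, y s t = Θ.f t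

lemma isCoupling_prod (Δ : FDist S) (Θ : FDist T) :
    IsCoupling Δ Θ fun s t => Δ.f s * Θ.f t where
  nonneg s t := mul_nonneg (Δ.nonneg s) (Θ.nonneg t)
  marginal_left s := by rw [← Finset.mul_sum, Θ.sum_one, mul_one]
  marginal_right t := by rw [← Finset.sum_mul, Δ.sum_one, one_mul]

lemma IsCoupling.finset_sum {ι : Type*} (I : Finset ι) (p : ι → ℝ) (hp : ∀ i ∈ I, 0 ≤ p i)
    {Δs : ι → FDist S} {Θs : ι → FDist T} {ys : ι → S → T → ℝ}
    (hys : ∀ i ∈ I, IsCoupling (Δs i) (Θs i) (ys i)) {Δ : FDist S} {Θ : FDist T}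
    (hΔ : Δ.f = ∑ i ∈ I, p i • (Δs i).f) (hΘ : Θ.f = ∑ i ∈ I, p i • (Θs i).f) :
    IsCoupling Δ Θ (∑ i ∈ I, p i • ys i) where
  nonneg s t := by
    simp only [Finset.sum_apply, Pi.smul_apply, smul_eq_mul]
    exact Finset.sum_nonneg fun i hi => mul_nonneg (hp i hi) ((hys i hi).nonneg s t)
  marginal_left s := by
    simp only [hΔ, Finset.sum_apply, Pi.smul_apply, smul_eq_mul]
    rw [Finset.sum_comm]
    exact Finset.sum_congr rfl fun i hi => by rw [← Finset.mul_sum, (hys i hi).marginal_left]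
  marginal_right t := by
    simp only [hΘ, Finset.sum_apply, Pi.smul_apply, smul_eq_mul]
    rw [Finset.sum_comm]
    exact Finset.sum_congr rfl fun i hi => by rw [← Finset.mul_sum, (hys i hi).marginal_right]

lemma IsCoupling.f_eq_sum_smul_point {Δ : FDist S} {Θ : FDist T} {y : S → T → ℝ}
    (hy : IsCoupling Δ Θ y) :
    Δ.f = ∑ st : S × T, y st.1 st.2 • (point st.1).f ∧
      Θ.f = ∑ st : S × T, y st.1 st.2 • (point st.2).f := by
  constructor <;> ext u <;>
    simp [Fintype.sum_prod_type, Finset.sum_apply, point, ← hy.marginal_left, ← hy.marginal_right]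

lemma IsCoupling.le_marginal_left {Δ : FDist S} {Θ : FDist T} {y : S → T → ℝ}
    (hy : IsCoupling Δ Θ y) (s : S) (t : T) : y s t ≤ Δ.f s :=
  hy.marginal_left s ▸ Finset.single_le_sum (fun t' _ => hy.nonneg s t') (Finset.mem_univ t)

lemma isCompact_setOf_isCoupling (Δ : FDist S) (Θ : FDist T) :
    IsCompact {y | IsCoupling Δ Θ y} := by
  have hclosed : IsClosed {y : S → T → ℝ | IsCoupling Δ Θ y} := by
    have : {y : S → T → ℝ | IsCoupling Δ Θ y} = {y | ∀ s t, 0 ≤ y s t} ∩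
        {y | ∀ s, ∑ t, y s t = Δ.f s} ∩ {y | ∀ t, ∑ s, y s t = Θ.f t} := by
      ext y
      exact ⟨fun ⟨h₀, h₁, h₂⟩ => ⟨⟨h₀, h₁⟩, h₂⟩, fun ⟨⟨h₀, h₁⟩, h₂⟩ => ⟨h₀, h₁, h₂⟩⟩
    rw [this]
    simp only [Set.ofPred_forall]
    refine ((isClosed_iInter fun s => isClosed_iInter fun t => ?_).inter
      (isClosed_iInter fun s => ?_)).inter (isClosed_iInter fun t => ?_)
    · exact isClosed_le continuous_const (by fun_prop)
    · exact isClosed_eq (by fun_prop) continuous_const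
    · exact isClosed_eq (by fun_prop) continuous_const
  exact isCompact_Icc.of_isClosed_subset hclosed fun y hy => ⟨fun s t => hy.nonneg s t,
    fun s t => (hy.le_marginal_left s t).trans (Δ.f_le_one s)⟩

end FDist

namespace Lift

variable {S T : Type*} [Fintype S] [Fintype T] {R : S → T → Prop}

theorem of_finset_sum {ι : Type*} [Countable ι] (I : Finset ι) (p : ι → ℝ)
    (hp : ∀ i ∈ I, 0 ≤ p i) (hsum : ∑ i ∈ I, p i = 1) {Δs : ι → FDist S} {Θs : ι → FDist T}
    (h : ∀ i ∈ I, Lift R (Δs i) (Θs i)) {Δ : FDist S} {Θ : FDist T}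
    (hΔ : Δ.f = ∑ i ∈ I, p i • (Δs i).f) (hΘ : Θ.f = ∑ i ∈ I, p i • (Θs i).f) :
    Lift R Δ Θ := by
  obtain ⟨i₀, -⟩ := Finset.nonempty_of_sum_ne_zero (hsum ▸ one_ne_zero)
  have : Nonempty ι := ⟨i₀⟩
  obtain ⟨enc, henc⟩ := exists_injective_nat ι
  have hdec := Function.leftInverse_invFun henc
  refine convex (I.image enc) (p ∘ Function.invFun enc) ?_ ?_ (Δs ∘ Function.invFun enc)
    (Θs ∘ Function.invFun enc) ?_ Δ Θ ?_ ?_ <;>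
    simpa [Finset.sum_image henc.injOn, hdec _]

theorem exists_isCoupling {Δ : FDist S} {Θ : FDist T} (h : Lift R Δ Θ) :
    ∃ y, FDist.IsCoupling Δ Θ y ∧ ∀ s t, y s t ≠ 0 → R s t := by
  induction h with
  | @point s t hst =>
    refine ⟨_, FDist.isCoupling_prod _ _, fun u v huv => ?_⟩
    by_cases hu : u = s <;> by_cases hv : v = t <;> simp_all [FDist.point]
  | convex I p hp _ Δs Θs _ Δ Θ hΔ hΘ ih =>
    have ih' : ∀ i, ∃ y, i ∈ I →
        FDist.IsCoupling (Δs i) (Θs i) y ∧ ∀ s t, y s t ≠ 0 → R s t := fun i =>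
      if hi : i ∈ I then (ih i hi).imp fun _ hy _ => hy else ⟨0, fun h => absurd h hi⟩
    choose ys hys using ih'
    refine ⟨∑ i ∈ I, p i • ys i,
      FDist.IsCoupling.finset_sum I p hp (fun i hi => (hys i hi).1) hΔ hΘ, fun s t hst => ?_⟩
    simp only [Finset.sum_apply, Pi.smul_apply, smul_eq_mul] at hst
    obtain ⟨i, hi, hpy⟩ := Finset.exists_ne_zero_of_sum_ne_zero hst
    exact (hys i hi).2 s t (right_ne_zero_of_mul hpy)

theorem of_isCoupling {Δ : FDist S} {Θ : FDist T} {y : S → T → ℝ}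
    (hy : FDist.IsCoupling Δ Θ y) (hR : ∀ s t, y s t ≠ 0 → R s t) : Lift R Δ Θ := by
  let I := Finset.univ.filter fun st : S × T => y st.1 st.2 ≠ 0
  refine of_finset_sum I (fun st => y st.1 st.2) (fun st _ => hy.nonneg _ _) ?_
    (fun st hst => point (hR _ _ (Finset.mem_filter.1 hst).2)) ?_ ?_
  · simpa [I, Finset.sum_filter_ne_zero, Fintype.sum_prod_type, hy.marginal_left] using Δ.sum_one
  · rw [Finset.sum_filter_of_ne fun st _ h => left_ne_zero_of_smul h]
    exact hy.f_eq_sum_smul_point.1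
  · rw [Finset.sum_filter_of_ne fun st _ h => left_ne_zero_of_smul h]
    exact hy.f_eq_sum_smul_point.2

end Lift

theorem lift_iff_exists_isCoupling {S T : Type*} [Fintype S] [Fintype T] {R : S → T → Prop}
    {Δ : FDist S} {Θ : FDist T} :
    Lift R Δ Θ ↔ ∃ y, FDist.IsCoupling Δ Θ y ∧ ∀ s t, y s t ≠ 0 → R s t :=
  ⟨Lift.exists_isCoupling, fun ⟨_, hy, hR⟩ => Lift.of_isCoupling hy hR⟩

lemma sum_sum_mul_nonneg {S T : Type*} [Fintype S] [Fintype T] {y m : S → T → ℝ}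
    (hy : ∀ s t, 0 ≤ y s t) (hm : ∀ s t, 0 ≤ m s t) : 0 ≤ ∑ s, ∑ t, y s t * m s t :=
  Finset.sum_nonneg fun s _ => Finset.sum_nonneg fun t _ => mul_nonneg (hy s t) (hm s t)

lemma sum_sum_mul_eq_zero_iff {S T : Type*} [Fintype S] [Fintype T] {y m : S → T → ℝ}
    (hy : ∀ s t, 0 ≤ y s t) (hm : ∀ s t, 0 ≤ m s t) :
    ∑ s, ∑ t, y s t * m s t = 0 ↔ ∀ s t, y s t ≠ 0 → m s t = 0 := by
  simp only [Finset.sum_eq_zero_iff_of_nonneg fun s _ =>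
      Finset.sum_nonneg fun t _ => mul_nonneg (hy s t) (hm s t),
    Finset.sum_eq_zero_iff_of_nonneg fun t _ => mul_nonneg (hy _ t) (hm _ t),
    Finset.mem_univ, true_imp_iff, mul_eq_zero, or_iff_not_imp_left]

section Kantorovich

variable {S : Type*} [Fintype S] {m : S → S → ℝ} {Δ Θ : FDist S}

lemma kantorovich_eq_sInf_image (m : S → S → ℝ) (Δ Θ : FDist S) :
    kantorovich m Δ Θ =
      sInf ((fun y => ∑ s, ∑ t, y s t * m s t) '' {y | FDist.IsCoupling Δ Θ y}) := by
  unfold kantorovich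
  congr 1
  ext c
  constructor
  · rintro ⟨y, h₀, h₁, h₂, rfl⟩
    exact ⟨y, ⟨h₀, h₁, h₂⟩, rfl⟩
  · rintro ⟨y, ⟨h₀, h₁, h₂⟩, rfl⟩
    exact ⟨y, h₀, h₁, h₂, rfl⟩

theorem exists_isCoupling_kantorovich_eq (m : S → S → ℝ) (Δ Θ : FDist S) :
    ∃ y, FDist.IsCoupling Δ Θ y ∧ kantorovich m Δ Θ = ∑ s, ∑ t, y s t * m s t := by
  rw [kantorovich_eq_sInf_image]
  have hcont : Continuous fun y : S → S → ℝ => ∑ s, ∑ t, y s t * m s t := by fun_prop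
  obtain ⟨y, hy, hcost⟩ := ((FDist.isCompact_setOf_isCoupling Δ Θ).image hcont).sInf_mem
    (Set.Nonempty.image _ ⟨_, FDist.isCoupling_prod Δ Θ⟩)
  exact ⟨y, hy, hcost.symm⟩

theorem kantorovich_le (hm : ∀ s t, 0 ≤ m s t) {y : S → S → ℝ} (hy : FDist.IsCoupling Δ Θ y) :
    kantorovich m Δ Θ ≤ ∑ s, ∑ t, y s t * m s t := by
  rw [kantorovich_eq_sInf_image]
  refine csInf_le ⟨0, ?_⟩ ⟨y, hy, rfl⟩
  rintro _ ⟨y', hy', rfl⟩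
  exact sum_sum_mul_nonneg hy'.nonneg hm

theorem kantorovich_eq_zero_iff (hm : ∀ s t, 0 ≤ m s t) :
    kantorovich m Δ Θ = 0 ↔ ∃ y, FDist.IsCoupling Δ Θ y ∧ ∀ s t, y s t ≠ 0 → m s t = 0 := by
  obtain ⟨y₀, hy₀, hmin⟩ := exists_isCoupling_kantorovich_eq m Δ Θ
  constructor
  · intro h
    exact ⟨y₀, hy₀, (sum_sum_mul_eq_zero_iff hy₀.nonneg hm).1 (hmin ▸ h)⟩
  · rintro ⟨y, hy, hker⟩
    refine le_antisymm ?_ ?_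
    · exact (kantorovich_le hm hy).trans ((sum_sum_mul_eq_zero_iff hy.nonneg hm).2 hker).le
    · exact hmin ▸ sum_sum_mul_nonneg hy₀.nonneg hm

end Kantorovich

theorem lift_iff_kantorovich_eq_zero_general {S : Type*} [Fintype S]
    (R : S → S → Prop) (m : S → S → ℝ)
    (hnonneg : ∀ s t, 0 ≤ m s t)
    (hRm : ∀ s t, R s t ↔ m s t = 0)
    (Δ Θ : FDist S) :
    Lift R Δ Θ ↔ kantorovich m Δ Θ = 0 := by
  rw [lift_iff_exists_isCoupling, kantorovich_eq_zero_iff hnonneg]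
  simp only [hRm]

/-- If the relation `R` coincides with the kernel of the 1-bounded
pseudometric `m` (i.e. `s R t ↔ m s t = 0`), then `Δ R† Θ` iff the
Kantorovich distance between `Δ` and `Θ` is `0`. -/
theorem lift_iff_kantorovich_eq_zero {S : Type*} [Fintype S]
    (R : S → S → Prop) (m : S → S → ℝ)
    (hnonneg : ∀ s t, 0 ≤ m s t) (hle_one : ∀ s t, m s t ≤ 1)
    (hrefl : ∀ s, m s s = 0) (hsymm : ∀ s t, m s t = m t s)
    (htriangle : ∀ s t u, m s t ≤ m s u + m u t)
    (hRm : ∀ s t, R s t ↔ m s t = 0)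
    (Δ Θ : FDist S) :
    Lift R Δ Θ ↔ kantorovich m Δ Θ = 0 :=
  lift_iff_kantorovich_eq_zero_general R m hnonneg hRm Δ Θ
end

section
/- Let S be a finite set, Δ, Θ ∈ D(S), and R ⊆ S × S. The following are equivalent: (1) there exists a weight function w : S × S → [0,1] with Σ_{t} w(s,t) = Δ(s) for all s, Σ_{s} w(s,t) = Θ(t) for all t, and w(s,t) > 0 implying s R t; (2) the maximum flow in the network N(Δ,Θ,R) equals 1. -/
open scoped Classical

/-- Nodes of the network `N(Δ,Θ,R)`: a copy `S` of the states (left layer),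
a disjoint copy `S'` (right layer), a source `⊥` and a sink `⊤`. -/
abbrev Node (S : Type*) := (S ⊕ S) ⊕ Bool

/-- The source `⊥`. -/
def Node.src {S : Type*} : Node S := Sum.inr false

/-- The sink `⊤`. -/
def Node.snk {S : Type*} : Node S := Sum.inr true

/-- The capacity function of the network `N(Δ,Θ,R)`: `c(⊥,s) = Δ(s)`,
`c(s,t') = 1` whenever `s R t` (these are exactly the edges from the left to
the right layer), `c(t',⊤) = Θ(t)`, and capacity `0` on all non-edges. -/
noncomputable def cap {S : Type*} [Fintype S] (Δ Θ : FDist S) (R : S → S → Prop) :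
    Node S → Node S → ℝ := fun u v =>
  match u, v with
  | Sum.inr false, Sum.inl (Sum.inl s) => Δ.f s
  | Sum.inl (Sum.inl s), Sum.inl (Sum.inr t) => if R s t then 1 else 0
  | Sum.inl (Sum.inr t), Sum.inr true => Θ.f t
  | _, _ => 0

/-- A flow function for capacity `c`: it is nonnegative, bounded by the
capacities (hence zero on non-edges), and conserves flow at every node other
than the source and the sink. -/
def IsFlow {S : Type*} [Fintype S] (c : Node S → Node S → ℝ)
    (g : Node S → Node S → ℝ) : Prop :=
  (∀ u v, 0 ≤ g u v ∧ g u v ≤ c u v) ∧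
  (∀ v : Node S, v ≠ Node.src → v ≠ Node.snk → ∑ u, g u v = ∑ u, g v u)

/-- The flow value `F(g)` of a flow `g`: total flow out of the source minus
total flow into the source. -/
noncomputable def flowValue {S : Type*} [Fintype S] (g : Node S → Node S → ℝ) : ℝ :=
  ∑ v, g Node.src v - ∑ v, g v Node.src

/-- The maximum flow of the network with capacity `c`: the supremum of the
values of all flow functions. -/
noncomputable def maxFlow {S : Type*} [Fintype S] (c : Node S → Node S → ℝ) : ℝ :=
  sSup { F | ∃ g, IsFlow c g ∧ F = flowValue g }

/-!
A weight function `w` is the same thing as a flow `g` in `N(Δ,Θ,R)` that saturates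
every edge out of the source and into the sink, via `w s t = g(s, t')`. Since the
source capacities sum to `1`, every flow has value at most `1`, and a flow of value
`1` saturates the source edges; conservation then forces it to saturate the sink
edges, whose capacities also sum to `1`. It remains to see that the supremum
`maxFlow` is attained: the flows form a compact subset of `Node S → Node S → ℝ`, on
which `flowValue` is continuous.
-/

section MaxFlow

variable {S : Type*} [Fintype S]

lemma IsFlow.apply_eq_zero {c g : Node S → Node S → ℝ} (hg : IsFlow c g) {u v : Node S}
    (huv : c u v = 0) : g u v = 0 :=
  le_antisymm (huv ▸ (hg.1 u v).2) (hg.1 u v).1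

lemma isCompact_setOf_isFlow (c : Node S → Node S → ℝ) :
    IsCompact {g : Node S → Node S → ℝ | IsFlow c g} := by
  have hbox : IsCompact (Set.univ.pi fun u : Node S => Set.univ.pi fun v => Set.Icc 0 (c u v)) :=
    isCompact_univ_pi fun u => isCompact_univ_pi fun v => isCompact_Icc
  refine hbox.of_isClosed_subset ?_ fun g hg =>
    Set.mem_univ_pi.2 fun u => Set.mem_univ_pi.2 fun v => hg.1 u v
  simp only [IsFlow, Set.ofPred_and, Set.ofPred_forall]
  refine ((isClosed_iInter fun u => isClosed_iInter fun v => ?_).inter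
    (isClosed_iInter fun v => isClosed_iInter fun _ => isClosed_iInter fun _ => ?_))
  · exact (isClosed_le (by fun_prop) (by fun_prop)).inter (isClosed_le (by fun_prop) (by fun_prop))
  · exact isClosed_eq (by fun_prop) (by fun_prop)

lemma maxFlow_eq_flowValue {c g : Node S → Node S → ℝ} (hg : IsFlow c g)
    (hmax : ∀ g', IsFlow c g' → flowValue g' ≤ flowValue g) : maxFlow c = flowValue g :=
  IsGreatest.csSup_eq ⟨⟨g, hg, rfl⟩, by rintro _ ⟨g', hg', rfl⟩; exact hmax g' hg'⟩

lemma exists_isFlow_maxFlow_eq {c : Node S → Node S → ℝ} (hc : ∀ u v, 0 ≤ c u v) :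
    ∃ g, IsFlow c g ∧ maxFlow c = flowValue g := by
  have hzero : IsFlow c 0 := ⟨fun u v => ⟨le_rfl, hc u v⟩, fun _ _ _ => rfl⟩
  have hcont : Continuous (flowValue (S := S)) := by unfold flowValue; fun_prop
  obtain ⟨g, hg, hmax⟩ :=
    (isCompact_setOf_isFlow c).exists_isMaxOn ⟨0, hzero⟩ hcont.continuousOn
  exact ⟨g, hg, maxFlow_eq_flowValue hg fun g' hg' => hmax hg'⟩

end MaxFlow

namespace Node

variable {S : Type*}

def left (s : S) : Node S := Sum.inl (Sum.inl s)

/-- The node `t'` of the network. -/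
def right (t : S) : Node S := Sum.inl (Sum.inr t)

lemma left_injective : Function.Injective (left : S → Node S) :=
  Sum.inl_injective.comp Sum.inl_injective

lemma right_injective : Function.Injective (right : S → Node S) :=
  Sum.inl_injective.comp Sum.inr_injective

end Node

open Node

section Network

variable {S : Type*} [Fintype S] {Δ Θ : FDist S} {R : S → S → Prop}

def IsWeightFunction (Δ Θ : FDist S) (R : S → S → Prop) (w : S → S → ℝ) : Prop :=
  (∀ s t, 0 ≤ w s t ∧ w s t ≤ 1) ∧
  (∀ s, ∑ t, w s t = Δ.f s) ∧
  (∀ t, ∑ s, w s t = Θ.f t) ∧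
  (∀ s t, 0 < w s t → R s t)

lemma cap_nonneg (Δ Θ : FDist S) (R : S → S → Prop) (u v : Node S) : 0 ≤ cap Δ Θ R u v := by
  rcases u with (s | s) | (_ | _) <;> rcases v with (t | t) | (_ | _) <;>
    simp only [cap, le_refl, Δ.nonneg, Θ.nonneg]
  split_ifs <;> norm_num

lemma cap_left_right_le_one (s t : S) : cap Δ Θ R (left s) (right t) ≤ 1 := by
  change (if R s t then (1 : ℝ) else 0) ≤ 1
  split_ifs <;> norm_num

lemma cap_left_right_eq_zero {s t : S} (h : ¬R s t) : cap Δ Θ R (left s) (right t) = 0 :=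
  if_neg h

namespace IsFlow

variable {g : Node S → Node S → ℝ}

lemma flowValue_eq (hg : IsFlow (cap Δ Θ R) g) : flowValue g = ∑ s, g src (left s) := by
  have hout : ∑ v, g src v = ∑ s, g src (left s) := by
    refine (Fintype.sum_of_injective left left_injective _ _ ?_ fun _ => rfl).symm
    rintro ((v | v) | (_ | _)) hv
    exacts [absurd ⟨v, rfl⟩ hv, hg.apply_eq_zero rfl, hg.apply_eq_zero rfl, hg.apply_eq_zero rfl]
  have hin : ∑ v, g v src = 0 :=
    Finset.sum_eq_zero fun v _ => hg.apply_eq_zero (by rcases v with (v | v) | (_ | _) <;> rfl)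
  rw [flowValue, hout, hin, sub_zero]

lemma sum_left_right_eq_src (hg : IsFlow (cap Δ Θ R) g) (s : S) :
    ∑ t, g (left s) (right t) = g src (left s) := by
  have hin : ∑ u, g u (left s) = g src (left s) := by
    refine Fintype.sum_eq_single src fun u hu => hg.apply_eq_zero ?_
    rcases u with (u | u) | (_ | _)
    exacts [rfl, rfl, absurd rfl hu, rfl]
  have hout : ∑ v, g (left s) v = ∑ t, g (left s) (right t) := by
    refine (Fintype.sum_of_injective right right_injective _ _ ?_ fun _ => rfl).symm
    rintro ((v | v) | (_ | _)) hv
    exacts [hg.apply_eq_zero rfl, absurd ⟨v, rfl⟩ hv, hg.apply_eq_zero rfl, hg.apply_eq_zero rfl]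
  rw [← hout, ← hin, hg.2 _ (by simp [left, src]) (by simp [left, snk])]

lemma sum_left_right_eq_snk (hg : IsFlow (cap Δ Θ R) g) (t : S) :
    ∑ s, g (left s) (right t) = g (right t) snk := by
  have hin : ∑ u, g u (right t) = ∑ s, g (left s) (right t) := by
    refine (Fintype.sum_of_injective left left_injective _ _ ?_ fun _ => rfl).symm
    rintro ((u | u) | (_ | _)) hu
    exacts [absurd ⟨u, rfl⟩ hu, hg.apply_eq_zero rfl, hg.apply_eq_zero rfl, hg.apply_eq_zero rfl]
  have hout : ∑ v, g (right t) v = g (right t) snk := by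
    refine Fintype.sum_eq_single snk fun v hv => hg.apply_eq_zero ?_
    rcases v with (v | v) | (_ | _)
    exacts [rfl, rfl, rfl, absurd rfl hv]
  rw [← hout, ← hin, hg.2 _ (by simp [right, src]) (by simp [right, snk])]

lemma flowValue_le_one (hg : IsFlow (cap Δ Θ R) g) : flowValue g ≤ 1 := by
  rw [hg.flowValue_eq, ← Δ.sum_one]
  exact Finset.sum_le_sum fun s _ => (hg.1 _ _).2

lemma isWeightFunction (hg : IsFlow (cap Δ Θ R) g) (hval : flowValue g = 1) :
    IsWeightFunction Δ Θ R fun s t => g (left s) (right t) := by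
  have hsrc : ∀ s, g src (left s) = Δ.f s := by
    refine fun s => (Finset.sum_eq_sum_iff_of_le fun s _ => (hg.1 src (left s)).2).1 ?_ s
      (Finset.mem_univ s)
    rw [← hg.flowValue_eq, hval]
    exact Δ.sum_one.symm
  have hrow : ∀ s, ∑ t, g (left s) (right t) = Δ.f s := fun s =>
    (hg.sum_left_right_eq_src s).trans (hsrc s)
  have hsnk : ∀ t, g (right t) snk = Θ.f t := by
    refine fun t => (Finset.sum_eq_sum_iff_of_le fun t _ => (hg.1 (right t) snk).2).1 ?_ t
      (Finset.mem_univ t)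
    simp_rw [← hg.sum_left_right_eq_snk]
    rw [Finset.sum_comm, Finset.sum_congr rfl fun s _ => hrow s, Δ.sum_one]
    exact Θ.sum_one.symm
  refine ⟨fun s t => ⟨(hg.1 _ _).1, (hg.1 _ _).2.trans (cap_left_right_le_one s t)⟩, hrow,
    fun t => (hg.sum_left_right_eq_snk t).trans (hsnk t), fun s t hpos => ?_⟩
  by_contra hR
  exact hpos.ne' (hg.apply_eq_zero (cap_left_right_eq_zero hR))

end IsFlow

noncomputable def weightFlow (Δ Θ : FDist S) (w : S → S → ℝ) : Node S → Node S → ℝ :=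
  fun u v =>
    match u, v with
    | Sum.inr false, Sum.inl (Sum.inl s) => Δ.f s
    | Sum.inl (Sum.inl s), Sum.inl (Sum.inr t) => w s t
    | Sum.inl (Sum.inr t), Sum.inr true => Θ.f t
    | _, _ => 0

lemma flowValue_weightFlow (Δ Θ : FDist S) (w : S → S → ℝ) :
    flowValue (weightFlow Δ Θ w) = 1 := by
  simp [flowValue, weightFlow, Fintype.sum_sum_type, src, Δ.sum_one]

lemma isFlow_weightFlow {w : S → S → ℝ} (hw : IsWeightFunction Δ Θ R w) :
    IsFlow (cap Δ Θ R) (weightFlow Δ Θ w) := by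
  obtain ⟨hbound, hrow, hcol, hsupp⟩ := hw
  refine ⟨fun u v => ?_, fun v hsrc hsnk => ?_⟩
  · rcases u with (s | s) | (_ | _) <;> rcases v with (t | t) | (_ | _) <;>
      simp only [weightFlow, cap, le_refl, and_self, Δ.nonneg, Θ.nonneg]
    refine ⟨(hbound s t).1, ?_⟩
    split_ifs with hR
    · exact (hbound s t).2
    · exact not_lt.1 fun hpos => hR (hsupp s t hpos)
  · rcases v with (s | t) | (_ | _)
    · simp [weightFlow, Fintype.sum_sum_type, hrow s]
    · simp [weightFlow, Fintype.sum_sum_type, hcol t]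
    · exact absurd rfl hsrc
    · exact absurd rfl hsnk

end Network

/-- There is a weight function for `(Δ,Θ)` w.r.t. `R` iff the maximum flow in
the network `N(Δ,Θ,R)` is `1`. -/
theorem weight_function_iff_maxFlow_one {S : Type*} [Fintype S]
    (Δ Θ : FDist S) (R : S → S → Prop) :
    (∃ w : S → S → ℝ,
        (∀ s t, 0 ≤ w s t ∧ w s t ≤ 1) ∧
        (∀ s, ∑ t, w s t = Δ.f s) ∧
        (∀ t, ∑ s, w s t = Θ.f t) ∧
        (∀ s t, 0 < w s t → R s t)) ↔
      maxFlow (cap Δ Θ R) = 1 := by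
  constructor
  · rintro ⟨w, hw⟩
    have hone := flowValue_weightFlow Δ Θ w
    rw [maxFlow_eq_flowValue (isFlow_weightFlow hw) fun g hg => hone ▸ hg.flowValue_le_one, hone]
  · intro hmax
    obtain ⟨g, hg, hg_max⟩ := exists_isFlow_maxFlow_eq (cap_nonneg Δ Θ R)
    exact ⟨_, hg.isWeightFunction (hg_max ▸ hmax)⟩
end
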